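/- The generating function Σ_{d≥0} t^d L_d(q), where L_d(q) = Σ_{(x,y) ∈ ℤ^2, |x|+|y| ≤ d} q^{x+y}, equals the rational function (1 − t^2)(1 + t) / ((1 − qt)^2 (1 − t/q)^2). -/

import Mathlib

open LaurentPolynomial

/-- The refined Ehrhart polynomial of the 2-dimensional cross-polytope `Ξ₂` with weight
vector `(1,1)`: `L_d(q) = ∑_{(x,y) ∈ ℤ², |x|+|y| ≤ d} q^{x+y}`. -/
noncomputable def crossL (d : ℕ) : LaurentPolynomial ℚ :=
  ∑ v ∈ ((Finset.Icc (-(d : ℤ)) d) ×ˢ (Finset.Icc (-(d : ℤ)) d)).filter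
      (fun v => v.1.natAbs + v.2.natAbs ≤ d),
    T (v.1 + v.2)

/-!
Writing `w_n = ∑_{|k| = n} q^k`, the points with `|x| + |y| ≤ d` split by the values of `|x|`
and `|y|`, so `L_d = ∑_{i + j + k = d} w_i w_j`, i.e. `∑ L_d t^d = W(t)² / (1 - t)` with
`W = ∑ w_n t^n = 1/(1 - qt) + 1/(1 - t/q) - 1 = (1 - t²) / ((1 - qt)(1 - t/q))`.
-/

open PowerSeries hiding C
open Finset hiding mk

theorem Finset.sum_Icc_neg_eq_sum_range {M : Type*} [AddCommMonoid M] (d : ℕ) (g : ℤ → M) :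
    ∑ x ∈ Icc (-(d : ℤ)) d, g x =
      ∑ j ∈ range (d + 1), if j = 0 then g 0 else g j + g (-(j : ℤ)) := by
  induction d with
  | zero => simp
  | succ d ih =>
    have hIcc : Icc (-((d : ℤ) + 1)) ((d : ℤ) + 1) =
        insert ((d : ℤ) + 1) (insert (-((d : ℤ) + 1)) (Icc (-(d : ℤ)) d)) := by
      ext x
      simp only [mem_Icc, mem_insert]
      omega
    push_cast
    rw [hIcc, sum_insert, sum_insert, sum_range_succ, ← ih]
    · push_cast
      abel
    · simp only [mem_Icc]; omega
    · simp only [mem_insert, mem_Icc]; omega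

theorem PowerSeries.mk_sum_range_succ {R : Type*} [Semiring R] (f : ℕ → R) :
    mk (fun n => ∑ i ∈ range (n + 1), f i) = mk f * mk 1 := by
  ext n
  simp [coeff_mul, Nat.sum_antidiagonal_eq_sum_range_succ (fun i _ => f i)]

theorem PowerSeries.one_sub_C_mul_X_mul_mk_pow {R : Type*} [CommRing R] (a : R) :
    (1 - C a * X) * mk (fun n => a ^ n) = 1 := by
  have h := congrArg (rescale a) (mk_one_mul_one_sub_eq_one (S := R))
  simpa [rescale_mk, mul_comm] using h

section AbsLevelSum

variable {R : Type*} [CommRing R]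

/-- `∑_{k ∈ ℤ, |k| = n} T k`. -/
noncomputable def absLevelSum (n : ℕ) : R[T;T⁻¹] :=
  if n = 0 then 1 else T n + T (-(n : ℤ))

theorem sum_Icc_T_eq_sum_absLevelSum (m : ℕ) :
    ∑ k ∈ Icc (-(m : ℤ)) m, (T k : R[T;T⁻¹]) = ∑ j ∈ range (m + 1), absLevelSum j := by
  rw [sum_Icc_neg_eq_sum_range]
  refine sum_congr rfl fun j _ => ?_
  split_ifs with hj <;> simp [absLevelSum, hj]

theorem mk_absLevelSum :
    mk (absLevelSum : ℕ → R[T;T⁻¹]) =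
      mk (fun n => (T 1 : R[T;T⁻¹]) ^ n) + mk (fun n => (T (-1) : R[T;T⁻¹]) ^ n) - 1 := by
  ext (_ | n) <;> simp [absLevelSum, T_pow, coeff_one]

theorem mul_mk_absLevelSum_eq_one_sub_X_sq :
    (1 - PowerSeries.C (T 1 : R[T;T⁻¹]) * X) * (1 - PowerSeries.C (T (-1)) * X) *
      mk (absLevelSum : ℕ → R[T;T⁻¹]) = 1 - X ^ 2 := by
  have hT : PowerSeries.C (T 1 : R[T;T⁻¹]) * PowerSeries.C (T (-1)) = 1 := by
    rw [← map_mul, ← T_add, add_neg_cancel, T_zero, map_one]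
  rw [mk_absLevelSum]
  linear_combination
    (1 - PowerSeries.C (T (-1) : R[T;T⁻¹]) * X) * one_sub_C_mul_X_mul_mk_pow (T 1 : R[T;T⁻¹]) +
      (1 - PowerSeries.C (T 1 : R[T;T⁻¹]) * X) * one_sub_C_mul_X_mul_mk_pow (T (-1) : R[T;T⁻¹]) -
      X ^ 2 * hT

end AbsLevelSum

theorem crossL_eq_sum (d : ℕ) :
    crossL d = ∑ j ∈ range (d + 1),
      absLevelSum j * ∑ i ∈ range (d - j + 1), absLevelSum i := by
  have hrow : ∀ x ∈ Icc (-(d : ℤ)) d,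
      (∑ y ∈ Icc (-(d : ℤ)) d, if x.natAbs + y.natAbs ≤ d then T (x + y) else 0) =
        T x * ∑ i ∈ range (d - x.natAbs + 1), (absLevelSum i : ℚ[T;T⁻¹]) := by
    intro x hx
    have hfilter : (Icc (-(d : ℤ)) d).filter (fun y => x.natAbs + y.natAbs ≤ d) =
        Icc (-((d - x.natAbs : ℕ) : ℤ)) (d - x.natAbs : ℕ) := by
      ext y
      simp only [mem_filter, mem_Icc] at hx ⊢
      omega
    rw [← sum_filter, hfilter, ← sum_Icc_T_eq_sum_absLevelSum, mul_sum]
    simp only [T_add]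
  rw [crossL, sum_filter, sum_product, sum_congr rfl hrow, sum_Icc_neg_eq_sum_range]
  refine sum_congr rfl fun j _ => ?_
  split_ifs with hj
  · simp [hj, absLevelSum]
  · simp only [absLevelSum, hj, if_false, Int.natAbs_neg, Int.natAbs_natCast]
    ring

theorem mk_crossL :
    mk crossL = mk absLevelSum * mk absLevelSum * mk 1 := by
  rw [mul_assoc, ← mk_sum_range_succ]
  refine PowerSeries.ext fun n => ?_
  simp only [coeff_mul, coeff_mk, Nat.sum_antidiagonal_eq_sum_range_succ
    (fun i j => absLevelSum i * ∑ k ∈ range (j + 1), absLevelSum k)]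
  exact crossL_eq_sum n

/-- The refined Ehrhart series `∑_{d ≥ 0} t^d L_d(q)` of the
cross-polytope `Ξ₂` with weight vector `(1,1)` equals
`(1 - t²)(1 + t) / ((1 - qt)² (1 - t/q)²)`, an identity of formal power series in `t` with
Laurent-polynomial coefficients in `q`, stated with the denominator cleared. -/
theorem stmt_15 :
    (1 - PowerSeries.C (T 1 : LaurentPolynomial ℚ) * PowerSeries.X) ^ 2 *
        (1 - PowerSeries.C (T (-1) : LaurentPolynomial ℚ) * PowerSeries.X) ^ 2 *
        PowerSeries.mk crossL
      = (1 - PowerSeries.X ^ 2) * (1 + PowerSeries.X) := by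
  calc _ = ((1 - PowerSeries.C (T 1) * X) * (1 - PowerSeries.C (T (-1)) * X) *
          mk absLevelSum) ^ 2 * mk 1 := by
        rw [mk_crossL]; ring
    _ = (1 - X ^ 2) ^ 2 * mk 1 := by
        rw [mul_mk_absLevelSum_eq_one_sub_X_sq]
    _ = (1 - X ^ 2) * (1 + X) := by
        linear_combination (1 - X ^ 2) * (1 + X) * mk_one_mul_one_sub_eq_one (S := ℚ[T;T⁻¹])
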